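/- arXiv:1810.09966 — 2 statements merged into one kernel-verified Lean document; each statement's English description precedes it below -/
import Mathlib

section
/- Let S be a completely regular semigroup, ρ a stable quasiorder on S, and s, t ∈ S J-equivalent. Then s ρ t if and only if s⁰ ρ t⁰ and t⁻¹·s ρ (t⁻¹·s)⁰. -/
/-!
The direction from `s ρ t` is a computation with stability alone. For the converse, with
`u = t⁻¹s` one has `s = s⁰s ρ t⁰s = tu ρ tu⁰ = tu⁰s⁰ ρ tu⁰t⁰`, and the last term is `t` as soon as
`u⁰t = t`. That identity is where `J`-equivalence enters: in a completely regular semigroup the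
`J`-preorder is compatible with products, so `t⁻¹ ≤_J t⁻¹s`, and `x ≤_J xy` forces `x ∈ (xy)S`,
whence `u⁰t⁻¹ = t⁻¹` and `u⁰t = t`.
-/

/-- `JBelow s t` : s lies in the two-sided ideal generated by t. -/
def JBelow {S : Type*} [Semigroup S] (s t : S) : Prop :=
  s = t ∨ (∃ a, s = a * t) ∨ (∃ b, s = t * b) ∨ (∃ a b, s = a * t * b)

/-- `JEquiv s t` : s and t generate the same two-sided ideal. -/
def JEquiv {S : Type*} [Semigroup S] (s t : S) : Prop :=
  JBelow s t ∧ JBelow t s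

section CompletelyRegular

variable {S : Type*} [Semigroup S]

structure IsCompletelyRegular (inv : S → S) : Prop where
  mul_inv_mul : ∀ x, x * inv x * x = x
  inv_inv : ∀ x, inv (inv x) = x
  mul_inv_comm : ∀ x, x * inv x = inv x * x

def JLe (x y : S) : Prop := ∃ a b, x = a * y * b

theorem JLe.trans {x y z : S} (hxy : JLe x y) (hyz : JLe y z) : JLe x z := by
  obtain ⟨a, b, rfl⟩ := hxy
  obtain ⟨c, d, rfl⟩ := hyz
  exact ⟨a * c, d * b, by simp only [mul_assoc]⟩

theorem JLe.of_jBelow {inv : S → S} (hinv : ∀ x, x * inv x * x = x) {x y : S}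
    (h : JBelow x y) : JLe x y := by
  have hy : y * inv y * y * (inv y * y) = y := by
    rw [hinv, ← mul_assoc, hinv]
  rcases h with rfl | ⟨a, rfl⟩ | ⟨b, rfl⟩ | h
  · exact ⟨x * inv x, inv x * x, hy.symm⟩
  · exact ⟨a, inv y * y, by rw [mul_assoc a, ← mul_assoc y, hinv]⟩
  · exact ⟨y * inv y, b, by rw [hinv]⟩
  · exact h

namespace IsCompletelyRegular

variable {inv : S → S} (hS : IsCompletelyRegular inv)
include hS

theorem mul_mul_inv (x : S) : x * (x * inv x) = x := by
  rw [hS.mul_inv_comm, ← mul_assoc, hS.mul_inv_mul]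

theorem inv_mul_inv (x : S) : inv x * x * inv x = inv x := by
  simpa only [hS.inv_inv] using hS.mul_inv_mul (inv x)

theorem mul_inv_mul_inv_mul (x y : S) : x * inv x * (inv x * y) = inv x * y := by
  rw [← mul_assoc, hS.mul_inv_comm, hS.inv_mul_inv]

theorem mul_inv_mul_eq_of_eq_mul {x v a : S} (h : x = v * a) : v * inv v * x = x := by
  rw [h, ← mul_assoc, hS.mul_inv_mul]

theorem mul_mul_mul_inv_of_eq_mul {x a v : S} (h : x = a * v) : x * (v * inv v) = x := by
  rw [h, mul_assoc, hS.mul_mul_inv]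

theorem jLe_mul_self (x : S) : JLe x (x * x) := by
  refine ⟨inv x, inv x * x, ?_⟩
  calc x = x * inv x * x * (inv x * x) := by
        rw [hS.mul_inv_mul, ← hS.mul_inv_comm, hS.mul_mul_inv]
    _ = inv x * (x * x) * (inv x * x) := by rw [hS.mul_inv_comm]; simp only [mul_assoc]

theorem jLe_mul_comm (x y : S) : JLe (x * y) (y * x) := by
  obtain ⟨a, b, h⟩ := hS.jLe_mul_self (x * y)
  exact ⟨a * x, y * b, by rw [h]; simp only [mul_assoc]⟩

theorem inv_jLe (x : S) : JLe (inv x) x :=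
  ⟨inv x, inv x, (hS.inv_mul_inv x).symm⟩

theorem jLe_inv (x : S) : JLe x (inv x) :=
  ⟨x, x, (hS.mul_inv_mul x).symm⟩

/-- From `z = axb = cyd` and `z ≤_J z²` one gets `z ≤_J x(bc)y`; rotating the factors,
`x(bc)y ≤_J yx(bc) ≤_J yx ≤_J xy`. -/
theorem jLe_mul {x y z : S} (hx : JLe z x) (hy : JLe z y) : JLe z (x * y) := by
  obtain ⟨a, b, hzx⟩ := hx
  obtain ⟨c, d, hzy⟩ := hy
  have h₁ : JLe z (x * (b * c * y)) := by
    obtain ⟨p, q, hz⟩ := hS.jLe_mul_self z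
    refine ⟨p * a, d * q, ?_⟩
    rw [hz]
    nth_rewrite 1 [hzx]
    rw [hzy]
    simp only [mul_assoc]
  have h₂ : JLe (x * (b * c * y)) (y * (x * (b * c))) := by
    simpa only [mul_assoc] using hS.jLe_mul_comm (x * (b * c)) y
  have h₃ : JLe (y * (x * (b * c))) (y * x) :=
    ⟨y * inv y, b * c, by simp only [← mul_assoc, hS.mul_inv_mul]⟩
  exact (((h₁.trans h₂).trans h₃).trans (hS.jLe_mul_comm y x))

theorem exists_eq_mul_of_jLe_mul {x y : S} (h : JLe x (x * y)) : ∃ c, x = x * y * c := by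
  obtain ⟨a, b, hx⟩ := h
  have hxv : x * (y * b * inv (y * b)) = x :=
    hS.mul_mul_mul_inv_of_eq_mul (a := a * x) (by nth_rewrite 1 [hx]; simp only [mul_assoc])
  rw [← mul_assoc] at hxv
  exact ⟨b * inv (y * b), by nth_rewrite 1 [← hxv]; simp only [mul_assoc]⟩

theorem mul_inv_mul_eq_of_jEquiv {s t : S} (hJ : JEquiv s t) :
    inv t * s * inv (inv t * s) * t = t := by
  have hts : JLe t (inv t * s) := hS.jLe_mul (hS.jLe_inv t) (JLe.of_jBelow hS.mul_inv_mul hJ.2)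
  obtain ⟨c, hc⟩ := hS.exists_eq_mul_of_jLe_mul ((hS.inv_jLe t).trans hts)
  refine hS.mul_inv_mul_eq_of_eq_mul (a := c * (t * t)) ?_
  calc t = inv t * t * t := by rw [← hS.mul_inv_comm, hS.mul_inv_mul]
    _ = inv t * s * (c * (t * t)) := by nth_rewrite 1 [hc]; simp only [mul_assoc]

end IsCompletelyRegular

section StableRelation

variable {inv : S → S} {ρ : S → S → Prop}
  (mul_left : ∀ a b c, ρ a b → ρ (c * a) (c * b))
  (mul_right : ∀ a b c, ρ a b → ρ (a * c) (b * c))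
include mul_left mul_right

theorem rel_mul_inv_of_rel [IsTrans S ρ] (rel_inv : ∀ a b, ρ a b → ρ (inv a) (inv b))
    {a b : S} (h : ρ a b) : ρ (a * inv a) (b * inv b) :=
  _root_.trans (mul_right _ _ _ h) (mul_left _ _ _ (rel_inv _ _ h))

namespace IsCompletelyRegular

variable (hS : IsCompletelyRegular inv)
include hS

theorem rel_inv_mul_of_rel {s t : S} (h : ρ s t) :
    ρ (inv t * s) (inv t * s * inv (inv t * s)) := by
  set u := inv t * s with hu
  have hut : ρ u (t * inv t) := by
    simpa only [← hS.mul_inv_comm] using mul_left _ _ (inv t) h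
  calc u = u * (u * inv u) := (hS.mul_mul_inv u).symm
    ρ _ (t * inv t * (u * inv u)) := mul_right _ _ _ hut
    _ = u * inv u := by rw [← mul_assoc, hu, hS.mul_inv_mul_inv_mul]

theorem rel_of_rel_mul_inv_of_rel_inv_mul [IsTrans S ρ] {s t : S}
    (ht : inv t * s * inv (inv t * s) * t = t) (h₀ : ρ (s * inv s) (t * inv t))
    (hker : ρ (inv t * s) (inv t * s * inv (inv t * s))) : ρ s t := by
  set u := inv t * s with hu
  calc s = s * inv s * s := (hS.mul_inv_mul s).symm
    ρ _ (t * inv t * s) := mul_right _ _ _ h₀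
    _ = t * u := by rw [hu]; simp only [mul_assoc]
    ρ _ (t * (u * inv u)) := mul_left _ _ _ hker
    _ = t * (u * inv u) * (s * inv s) := by
      rw [hS.mul_inv_comm u, hu]; simp only [mul_assoc, hS.mul_mul_inv]
    ρ _ (t * (u * inv u) * (t * inv t)) := mul_left _ _ _ h₀
    _ = t := by rw [← mul_assoc, mul_assoc t, ht, mul_assoc, hS.mul_mul_inv]

end IsCompletelyRegular

end StableRelation

end CompletelyRegular

theorem trace_kernel_characterization_left_general
    {S : Type*} [Semigroup S] (inv : S → S)
    (hinv1 : ∀ x, x * inv x * x = x)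
    (hinv2 : ∀ x, inv (inv x) = x)
    (hinv3 : ∀ x, x * inv x = inv x * x)
    (ρ : S → S → Prop)
    (htrans : ∀ a b c, ρ a b → ρ b c → ρ a c)
    (hmul_left : ∀ a b c, ρ a b → ρ (c * a) (c * b))
    (hmul_right : ∀ a b c, ρ a b → ρ (a * c) (b * c))
    (hinv_stable : ∀ a b, ρ a b → ρ (inv a) (inv b))
    (s t : S) (hJ : JEquiv s t) :
    ρ s t ↔ (ρ (s * inv s) (t * inv t) ∧
      ρ (inv t * s) ((inv t * s) * inv (inv t * s))) := by
  have hS : IsCompletelyRegular inv := ⟨hinv1, hinv2, hinv3⟩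
  have : IsTrans S ρ := ⟨htrans⟩
  constructor
  · intro h
    exact ⟨rel_mul_inv_of_rel hmul_left hmul_right hinv_stable h,
      hS.rel_inv_mul_of_rel hmul_left hmul_right h⟩
  · rintro ⟨h₀, hker⟩
    exact hS.rel_of_rel_mul_inv_of_rel_inv_mul hmul_left hmul_right
      (hS.mul_inv_mul_eq_of_jEquiv hJ) h₀ hker

/-- For a stable quasiorder ρ on a completely regular semigroup and J-equivalent
elements s, t: s ρ t iff s⁰ ρ t⁰ and t⁻¹s ρ (t⁻¹s)⁰, where a⁰ = a·a⁻¹. -/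
theorem trace_kernel_characterization_left
    {S : Type*} [Semigroup S] (inv : S → S)
    (hinv1 : ∀ x, x * inv x * x = x)
    (hinv2 : ∀ x, inv (inv x) = x)
    (hinv3 : ∀ x, x * inv x = inv x * x)
    (ρ : S → S → Prop)
    (hrefl : ∀ a, ρ a a)
    (htrans : ∀ a b c, ρ a b → ρ b c → ρ a c)
    (hmul_left : ∀ a b c, ρ a b → ρ (c * a) (c * b))
    (hmul_right : ∀ a b c, ρ a b → ρ (a * c) (b * c))
    (hinv_stable : ∀ a b, ρ a b → ρ (inv a) (inv b))
    (s t : S) (hJ : JEquiv s t) :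
    ρ s t ↔ (ρ (s * inv s) (t * inv t) ∧
      ρ (inv t * s) ((inv t * s) * inv (inv t * s))) :=
  trace_kernel_characterization_left_general inv hinv1 hinv2 hinv3 ρ htrans hmul_left hmul_right
    hinv_stable s t hJ
end

section
/- Let S be a finite ordered normal orthogroup satisfying the pseudoinequality x^ω ≤ x^ω y^ω x^ω, let e ∈ E(S), and let H_e^⊤ be the group H_e with an adjoined element ⊤ which is a multiplicative zero and the maximum of the order (elements of H_e being pairwise incomparable). Then the map ψ_e : S → H_e^⊤ defined by ψ_e(s) = ese if e s^ω e = e and ψ_e(s) = ⊤ otherwise, is a homomorphism of ordered semigroups. -/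
/-- `spow a n` is the power `a^(n+1)` in a semigroup. -/
def spow {S : Type*} [Semigroup S] (a : S) : ℕ → S
  | 0 => a
  | n + 1 => spow a n * a

/-!
Everything happens in the maximal subgroup `H_e`. If `e s^ω e = e`, then `(es)^ω R e L (se)^ω`
in the orthodox band `E(S)`, so `(es)^ω (se)^ω = e`; inserting this between `es` and `se` gives
`e s t e = (e s e)(e t e)` and `e s e ∈ H_e`. The pseudoinequality `(st)^ω ≤ (st)^ω e (st)^ω`,
applied along the powers of `st`, gives `e (st)^ω e ≤ ((e s e)(e t e))^ω = e`, while `e ≤ e x^ω e`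
holds for every `x`; so the domain of `ψ_e` is closed under products. For isotonicity, `s ≤ t`
gives `s^ω ≤ t^ω`, and if `a ≤ b` in `H_e` then `e ≤ a⁻¹ b`, hence `a⁻¹ b ≤ (a⁻¹ b)^n` for all
`n`; taking `(a⁻¹ b)^n = (a⁻¹ b)^ω = e` forces `a⁻¹ b = e`.
-/

section Power

variable {S : Type*} [Semigroup S]

theorem spow_succ (a : S) (n : ℕ) : spow a (n + 1) = spow a n * a := rfl

theorem spow_add (a : S) (m n : ℕ) : spow a (m + n + 1) = spow a m * spow a n := by
  induction n with
  | zero => rfl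
  | succ n ih => rw [← add_assoc, spow_succ, ih, spow_succ, mul_assoc]

theorem mul_spow (a : S) (n : ℕ) : a * spow a n = spow a (n + 1) := by
  have h := spow_add a 0 n
  rw [zero_add] at h
  exact h.symm

theorem mul_spow_of_mul_eq {e a : S} (h : e * a = a) (n : ℕ) : e * spow a n = spow a n := by
  induction n with
  | zero => exact h
  | succ n ih => rw [spow_succ, ← mul_assoc, ih]

theorem spow_mul_of_mul_eq {e a : S} (h : a * e = a) (n : ℕ) : spow a n * e = spow a n := by
  induction n with
  | zero => exact h
  | succ n ih => rw [spow_succ, mul_assoc, h]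

theorem spow_of_isIdempotentElem {a : S} (h : IsIdempotentElem a) (n : ℕ) : spow a n = a := by
  induction n with
  | zero => rfl
  | succ n ih => rw [spow_succ, ih, h.eq]

theorem spow_mul_left {e u : S} (h : u * e = u) (n : ℕ) : spow (e * u) n = e * spow u n := by
  induction n with
  | zero => rfl
  | succ n ih =>
    rw [spow_succ, spow_succ, ih, ← mul_assoc, mul_assoc e, spow_mul_of_mul_eq h, mul_assoc]

theorem spow_mono [Preorder S] [MulLeftMono S] [MulRightMono S] {a b : S} (h : a ≤ b) (n : ℕ) :
    spow a n ≤ spow b n := by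
  induction n with
  | zero => exact h
  | succ n ih => exact mul_le_mul' ih h

end Power

section Band

variable {S : Type*} [Semigroup S]

/-- In Green's terms the hypotheses say `m R e L j`. -/
theorem mul_eq_of_R_of_L {e m j : S} (hjm : IsIdempotentElem (j * m)) (hem : e * m = m)
    (hme : m * e = e) (hej : e * j = e) (hje : j * e = j) : m * j = e :=
  calc m * j = e * j * m * j * m * e := by
        rw [mul_assoc _ m e, hme, mul_assoc _ j e, hje, hej, hem]
    _ = e * ((j * m) * (j * m)) * e := by simp only [mul_assoc]
    _ = e := by rw [hjm.eq, ← mul_assoc, hej, hem, hme]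

theorem conj_eq_of_mul_eq_left {e f g : S} (hef : IsIdempotentElem (e * f)) (hfg : f * g = g)
    (h : e * g * e = e) : e * f * e = e := by
  have hg : e * g = e * f * g := by rw [mul_assoc, hfg]
  calc e * f * e = e * f * (e * g * e) := by rw [h]
    _ = (e * f) * (e * f) * g * e := by rw [hg]; simp only [mul_assoc]
    _ = e := by rw [hef.eq, ← hg, h]

theorem conj_eq_of_mul_eq_right {e f g : S} (hfe : IsIdempotentElem (f * e)) (hgf : g * f = g)
    (h : e * g * e = e) : e * f * e = e :=
  calc e * f * e = e * (g * f) * e * f * e := by rw [hgf, h]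
    _ = e * g * ((f * e) * (f * e)) := by simp only [mul_assoc]
    _ = e := by rw [hfe.eq, ← mul_assoc, mul_assoc e g f, hgf, h]

end Band

/-- `ω a` is `a^ω`, the identity of the maximal subgroup containing `a`. -/
structure IsIdempotentPower {S : Type*} [Semigroup S] (ω : S → S) : Prop where
  exists_eq_spow : ∀ a, ∃ n, ω a = spow a n
  idem : ∀ a, ω a * ω a = ω a
  omega_mul : ∀ a, ω a * a = a
  mul_omega : ∀ a, a * ω a = a

namespace IsIdempotentPower

variable {S : Type*} [Semigroup S] {ω : S → S}

theorem spow_add_mul_succ (hω : IsIdempotentPower ω) {a : S} {n : ℕ} (hn : ω a = spow a n)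
    (q : ℕ) : spow a (n + q * (n + 1)) = ω a := by
  induction q with
  | zero => simpa using hn.symm
  | succ q ih =>
    rw [show n + (q + 1) * (n + 1) = n + q * (n + 1) + n + 1 by ring, spow_add, ih, ← hn,
      hω.idem]

theorem exists_common_spow_eq_omega (hω : IsIdempotentPower ω) (a b : S) :
    ∃ k, spow a k = ω a ∧ spow b k = ω b := by
  obtain ⟨m, hm⟩ := hω.exists_eq_spow a
  obtain ⟨n, hn⟩ := hω.exists_eq_spow b
  refine ⟨m + n * (m + 1), hω.spow_add_mul_succ hm n, ?_⟩
  rw [show m + n * (m + 1) = n + m * (n + 1) by ring]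
  exact hω.spow_add_mul_succ hn m

theorem exists_inv (hω : IsIdempotentPower ω) (a : S) :
    ∃ b, b * a = ω a ∧ a * b = ω a ∧ ω a * b = b := by
  obtain ⟨n, hn⟩ := hω.exists_eq_spow a
  have h : spow a (n + n + 1) = ω a := by rw [spow_add, ← hn, hω.idem]
  exact ⟨spow a (n + n), h, by rw [mul_spow, h], mul_spow_of_mul_eq (hω.omega_mul a) _⟩

theorem omega_of_isIdempotentElem (hω : IsIdempotentPower ω) {e : S} (he : IsIdempotentElem e) :
    ω e = e := by
  obtain ⟨n, hn⟩ := hω.exists_eq_spow e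
  rw [hn, spow_of_isIdempotentElem he]

theorem omega_mul_omega_mul (hω : IsIdempotentPower ω) (s t : S) :
    ω s * ω (s * t) = ω (s * t) := by
  obtain ⟨n, hn⟩ := hω.exists_eq_spow (s * t)
  rw [hn]
  exact mul_spow_of_mul_eq (by rw [← mul_assoc, hω.omega_mul]) n

theorem omega_mul_mul_omega (hω : IsIdempotentPower ω) (s t : S) :
    ω (s * t) * ω t = ω (s * t) := by
  obtain ⟨n, hn⟩ := hω.exists_eq_spow (s * t)
  rw [hn]
  exact spow_mul_of_mul_eq (by rw [mul_assoc, hω.mul_omega]) n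

theorem omega_eq_of_mul_eq (hω : IsIdempotentPower ω) {e u v : S} (hvu : v * u = e)
    (heu : e * u = u) : ω u = e := by
  obtain ⟨n, hn⟩ := hω.exists_eq_spow u
  calc ω u = e * ω u := by rw [hn, mul_spow_of_mul_eq heu]
    _ = e := by rw [← hvu, mul_assoc, hω.mul_omega]

theorem omega_mul_eq (hω : IsIdempotentPower ω) {e a b : S} (ha : ω a = e) (hb : ω b = e) :
    ω (a * b) = e := by
  obtain ⟨a', ha'a, -, -⟩ := hω.exists_inv a
  obtain ⟨b', hb'b, -, -⟩ := hω.exists_inv b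
  have heb : e * b = b := hb ▸ hω.omega_mul b
  refine hω.omega_eq_of_mul_eq (v := b' * a') ?_ ?_
  · rw [mul_assoc, ← mul_assoc a', ha'a, ha, heb, hb'b, hb]
  · rw [← mul_assoc, ← ha, hω.omega_mul]

theorem omega_mul_of_mul_eq (hω : IsIdempotentPower ω) {e u : S} (h : u * e = u) :
    ω (e * u) = e * ω u := by
  obtain ⟨k, hk, hk'⟩ := hω.exists_common_spow_eq_omega (e * u) u
  rw [← hk, ← hk', spow_mul_left h]

theorem omega_mul_mul_eq_of_conj_omega (hω : IsIdempotentPower ω) {e x : S}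
    (hx : e * ω x * e = e) : ω (e * x) * e = e := by
  obtain ⟨x', -, hxx', -⟩ := hω.exists_inv x
  have h : e * x * (x' * e) = e := by rw [← mul_assoc, mul_assoc e x x', hxx', hx]
  calc ω (e * x) * e = ω (e * x) * (e * x * (x' * e)) := by rw [h]
    _ = e := by rw [← mul_assoc, hω.omega_mul, h]

theorem mul_omega_mul_eq_of_conj_omega (hω : IsIdempotentPower ω) {e y : S}
    (hy : e * ω y * e = e) : e * ω (y * e) = e := by
  obtain ⟨y', hy'y, -, -⟩ := hω.exists_inv y
  have h : e * y' * (y * e) = e := by rw [← mul_assoc, mul_assoc e y' y, hy'y, hy]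
  calc e * ω (y * e) = e * y' * (y * e) * ω (y * e) := by rw [h]
    _ = e := by rw [mul_assoc _ (y * e), hω.mul_omega, h]

theorem omega_conj_eq_of_conj_omega (hω : IsIdempotentPower ω) {e x : S}
    (he : IsIdempotentElem e) (hx : e * ω x * e = e) : ω (e * x * e) = e := by
  rw [mul_assoc, hω.omega_mul_of_mul_eq (by rw [mul_assoc, he.eq]),
    hω.mul_omega_mul_eq_of_conj_omega hx]

theorem conj_mul_eq_of_conj_omega (hω : IsIdempotentPower ω)
    (horthodox : ∀ f g : S, IsIdempotentElem f → IsIdempotentElem g → IsIdempotentElem (f * g))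
    {e x y : S} (he : IsIdempotentElem e) (hx : e * ω x * e = e) (hy : e * ω y * e = e) :
    e * (x * y) * e = e * x * e * (e * y * e) := by
  have hωe := hω.omega_of_isIdempotentElem he
  have hmj : ω (e * x) * ω (y * e) = e :=
    mul_eq_of_R_of_L (horthodox _ _ (hω.idem _) (hω.idem _))
      (by simpa only [hωe] using hω.omega_mul_omega_mul e x)
      (hω.omega_mul_mul_eq_of_conj_omega hx) (hω.mul_omega_mul_eq_of_conj_omega hy)
      (by simpa only [hωe] using hω.omega_mul_mul_omega y e)
  calc e * (x * y) * e = e * x * ω (e * x) * (ω (y * e) * (y * e)) := by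
        rw [hω.mul_omega, hω.omega_mul]; simp only [mul_assoc]
    _ = e * x * (ω (e * x) * ω (y * e)) * (y * e) := by simp only [mul_assoc]
    _ = e * x * e * (e * y * e) := by rw [hmj]; simp only [mul_assoc, he.mul_self_mul]

theorem omega_mono [Preorder S] [MulLeftMono S] [MulRightMono S] (hω : IsIdempotentPower ω)
    {s t : S} (h : s ≤ t) : ω s ≤ ω t := by
  obtain ⟨k, hs, ht⟩ := hω.exists_common_spow_eq_omega s t
  rw [← hs, ← ht]
  exact spow_mono h k

theorem eq_of_omega_eq_of_le [PartialOrder S] [MulLeftMono S] (hω : IsIdempotentPower ω)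
    {e z : S} (hz : ω z = e) (hez : e ≤ z) : z = e := by
  have hze : z * e = z := hz ▸ hω.mul_omega z
  have hchain : ∀ n, z ≤ spow z n := by
    intro n
    induction n with
    | zero => exact le_rfl
    | succ n ih =>
      calc z ≤ spow z n := ih
        _ = spow z n * e := (spow_mul_of_mul_eq hze n).symm
        _ ≤ spow z (n + 1) := mul_le_mul_right hez _
  obtain ⟨n, hn⟩ := hω.exists_eq_spow z
  exact le_antisymm ((hchain n).trans_eq (hn.symm.trans hz)) hez

theorem eq_of_le_of_omega_eq [PartialOrder S] [MulLeftMono S] (hω : IsIdempotentPower ω)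
    {e a b : S} (ha : ω a = e) (hb : ω b = e) (hab : a ≤ b) : a = b := by
  obtain ⟨a', ha'a, haa', ha'⟩ := hω.exists_inv a
  obtain ⟨b', hb'b, -, -⟩ := hω.exists_inv b
  have heb : e * b = b := hb ▸ hω.omega_mul b
  have hz : ω (a' * b) = e := by
    refine hω.omega_eq_of_mul_eq (v := b' * a) ?_ ?_
    · rw [mul_assoc, ← mul_assoc a, haa', ha, heb, hb'b, hb]
    · rw [← mul_assoc, ← ha, ha']
  have hz' : a' * b = e :=
    hω.eq_of_omega_eq_of_le hz (by simpa only [ha'a, ha] using mul_le_mul_right hab a')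
  calc a = a * e := by rw [← ha, hω.mul_omega]
    _ = b := by rw [← hz', ← mul_assoc, haa', ha, heb]

theorem conj_spow_le_spow_conj [Preorder S] [MulLeftMono S] [MulRightMono S]
    (hω : IsIdempotentPower ω) (hineq : ∀ s t : S, ω s ≤ ω s * ω t * ω s) {e : S}
    (he : IsIdempotentElem e) (u : S) (n : ℕ) : e * spow u n * e ≤ spow (e * u * e) n := by
  have hωu : ω u ≤ ω u * e * ω u := by
    simpa only [hω.omega_of_isIdempotentElem he] using hineq u e
  induction n with
  | zero => exact le_rfl
  | succ n ih =>
    have hS : ∀ z, spow u n * (ω u * z) = spow u n * z := fun z => by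
      rw [← mul_assoc, spow_mul_of_mul_eq (hω.mul_omega u)]
    have hU : ∀ z, ω u * (u * z) = u * z := fun z => by rw [← mul_assoc, hω.omega_mul]
    calc e * spow u (n + 1) * e = e * spow u n * ω u * (u * e) := by
          simp only [spow_succ, mul_assoc, hS]
      _ ≤ e * spow u n * (ω u * e * ω u) * (u * e) := by gcongr
      _ = e * spow u n * e * (e * u * e) := by simp only [mul_assoc, hS, hU, he.mul_self_mul]
      _ ≤ spow (e * u * e) (n + 1) := mul_le_mul_left ih _

theorem conj_omega_le_omega_conj [Preorder S] [MulLeftMono S] [MulRightMono S]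
    (hω : IsIdempotentPower ω) (hineq : ∀ s t : S, ω s ≤ ω s * ω t * ω s) {e : S}
    (he : IsIdempotentElem e) (u : S) : e * ω u * e ≤ ω (e * u * e) := by
  obtain ⟨k, hu, hc⟩ := hω.exists_common_spow_eq_omega u (e * u * e)
  rw [← hu, ← hc]
  exact hω.conj_spow_le_spow_conj hineq he u k

theorem le_conj_omega [LE S] (hω : IsIdempotentPower ω)
    (hineq : ∀ s t : S, ω s ≤ ω s * ω t * ω s) {e : S} (he : IsIdempotentElem e) (u : S) :
    e ≤ e * ω u * e := by
  simpa only [hω.omega_of_isIdempotentElem he] using hineq e u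

end IsIdempotentPower

/-- Writing `P s` for `e s^ω e = e` (i.e. `ψ_e s ≠ ⊤`), the conjuncts say: `ψ_e` lands in `H_e`
where `P` holds, `ψ_e (st) = ⊤` iff `ψ_e s = ⊤` or `ψ_e t = ⊤`, `ψ_e` is multiplicative on
non-`⊤` values, and `ψ_e` is isotone (in `H_e^⊤` distinct elements of `H_e` are incomparable
and `⊤` is the maximum). -/
theorem psi_e_ordered_homomorphism_general
    {S : Type*} [Semigroup S] [PartialOrder S]
    (hle_left : ∀ a b c : S, a ≤ b → c * a ≤ c * b)
    (hle_right : ∀ a b c : S, a ≤ b → a * c ≤ b * c)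
    (ω : S → S)
    (hpow : ∀ a : S, ∃ n : ℕ, ω a = spow a n)
    (hidem : ∀ a : S, ω a * ω a = ω a)
    (hcr_left : ∀ a : S, ω a * a = a)
    (hcr_right : ∀ a : S, a * ω a = a)
    (horthodox : ∀ e f : S, e * e = e → f * f = f → (e * f) * (e * f) = e * f)
    (hineq : ∀ s t : S, ω s ≤ ω s * ω t * ω s)
    (e : S) (he : e * e = e) :
    (∀ s : S, e * ω s * e = e → ω (e * s * e) = e) ∧
    (∀ s t : S, e * ω (s * t) * e = e ↔ (e * ω s * e = e ∧ e * ω t * e = e)) ∧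
    (∀ s t : S, e * ω s * e = e → e * ω t * e = e →
      e * (s * t) * e = (e * s * e) * (e * t * e)) ∧
    (∀ s t : S, s ≤ t → e * ω t * e = e →
      (e * ω s * e = e ∧ e * s * e = e * t * e)) := by
  have hω : IsIdempotentPower ω := ⟨hpow, hidem, hcr_left, hcr_right⟩
  have : MulLeftMono S := ⟨fun c _ _ h => hle_left _ _ c h⟩
  have : MulRightMono S := ⟨fun c _ _ h => hle_right _ _ c h⟩
  have hH : ∀ s, e * ω s * e = e → ω (e * s * e) = e :=
    fun s hs => hω.omega_conj_eq_of_conj_omega he hs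
  have hmul : ∀ s t, e * ω s * e = e → e * ω t * e = e →
      e * (s * t) * e = e * s * e * (e * t * e) :=
    fun s t hs ht => hω.conj_mul_eq_of_conj_omega horthodox he hs ht
  refine ⟨hH, fun s t => ⟨fun h => ⟨?_, ?_⟩, fun ⟨hs, ht⟩ => ?_⟩, hmul, fun s t hst ht => ?_⟩
  · exact conj_eq_of_mul_eq_left (horthodox _ _ he (hidem s)) (hω.omega_mul_omega_mul s t) h
  · exact conj_eq_of_mul_eq_right (horthodox _ _ (hidem t) he) (hω.omega_mul_mul_omega s t) h
  · refine le_antisymm ?_ (hω.le_conj_omega hineq he _)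
    calc e * ω (s * t) * e ≤ ω (e * (s * t) * e) := hω.conj_omega_le_omega_conj hineq he _
      _ = e := by rw [hmul s t hs ht]; exact hω.omega_mul_eq (hH s hs) (hH t ht)
  · have hs : e * ω s * e = e := by
      refine le_antisymm ?_ (hω.le_conj_omega hineq he s)
      calc e * ω s * e ≤ e * ω t * e := by gcongr; exact hω.omega_mono hst
        _ = e := ht
    exact ⟨hs, hω.eq_of_le_of_omega_eq (hH s hs) (hH t ht) (by gcongr)⟩

/-- Let S be a finite ordered normal orthogroup satisfying x^ω ≤ x^ω y^ω x^ω and e an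
idempotent.  The map ψ_e into H_e^⊤ (sending s to ese if e s^ω e = e and to ⊤ otherwise)
is a homomorphism of ordered semigroups.  Writing `P s` for the condition `e s^ω e = e`
(i.e. ψ_e s ≠ ⊤), this says: ψ_e lands in H_e on such elements, ψ_e(st) = ⊤ iff
ψ_e s = ⊤ or ψ_e t = ⊤, ψ_e is multiplicative on non-⊤ values, and ψ_e is isotone
(recalling that in H_e^⊤ distinct elements of H_e are incomparable and ⊤ is the maximum,
so s ≤ t forces either ψ_e t = ⊤ or ψ_e s = ψ_e t ∈ H_e). -/
theorem psi_e_ordered_homomorphism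
    {S : Type*} [Semigroup S] [Fintype S] [PartialOrder S]
    (hle_left : ∀ a b c : S, a ≤ b → c * a ≤ c * b)
    (hle_right : ∀ a b c : S, a ≤ b → a * c ≤ b * c)
    (ω : S → S)
    (hpow : ∀ a : S, ∃ n : ℕ, ω a = spow a n)
    (hidem : ∀ a : S, ω a * ω a = ω a)
    (hcr_left : ∀ a : S, ω a * a = a)
    (hcr_right : ∀ a : S, a * ω a = a)
    (horthodox : ∀ e f : S, e * e = e → f * f = f → (e * f) * (e * f) = e * f)
    (hnormal : ∀ e f g : S, e * e = e → f * f = f → g * g = g →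
      e * f * e * g * e = e * g * e * f * e)
    (hineq : ∀ s t : S, ω s ≤ ω s * ω t * ω s)
    (e : S) (he : e * e = e) :
    (∀ s : S, e * ω s * e = e → ω (e * s * e) = e) ∧
    (∀ s t : S, e * ω (s * t) * e = e ↔ (e * ω s * e = e ∧ e * ω t * e = e)) ∧
    (∀ s t : S, e * ω s * e = e → e * ω t * e = e →
      e * (s * t) * e = (e * s * e) * (e * t * e)) ∧
    (∀ s t : S, s ≤ t → e * ω t * e = e →
      (e * ω s * e = e ∧ e * s * e = e * t * e)) :=
  psi_e_ordered_homomorphism_general hle_left hle_right ω hpow hidem hcr_left hcr_right horthodox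
    hineq e he
end
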